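/- arXiv:2605.01398 — 8 statements merged into one kernel-verified Lean document; each statement's English description precedes it below -/
import Mathlib

section
/- Let A be an n×n integer matrix with nonnegative entries (the adjacency matrix of a finite digraph) and assume δ(A) = 0, i.e. the order of vanishing r_A of g_A(u) = det(I − u·A) at u = 1 equals the free rank of BF(A) = ℤⁿ/(I − A)ℤⁿ. Then there exists a nonzero integer m(A) such that g_A*(1) = m(A) · #BF(A)_tors; in particular g_A*(1) is a nonzero integer divisible by the cardinality of the torsion subgroup of the Bowen–Franks group. (Paper's Theorem 'the_special_value'.) -/
open Polynomial

/-- The reverse characteristic polynomial `g_A(u) = det(I - u • A) ∈ ℤ[u]`. -/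
noncomputable def revCharPoly {n : ℕ} (A : Matrix (Fin n) (Fin n) ℤ) : Polynomial ℤ :=
  Matrix.det ((1 : Matrix (Fin n) (Fin n) (Polynomial ℤ)) - (X : Polynomial ℤ) • A.map C)

/-- The Bowen--Franks group `BF(A) = ℤⁿ/(I - A)ℤⁿ`. -/
abbrev BFGroup {n : ℕ} (A : Matrix (Fin n) (Fin n) ℤ) :=
  (Fin n → ℤ) ⧸ LinearMap.range (Matrix.toLin' ((1 : Matrix (Fin n) (Fin n) ℤ) - A))

/-!
Write `B = I - A = L * D` with `L` unimodular and the `i`-th row of `D` divisible by the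
`i`-th Smith coefficient `dᵢ` of the range of `B` (extended by `0` to all of `Fin n`). Then
`BF(A) ≅ ∏ ℤ/dᵢ`, so its rank is `z = #{i | dᵢ = 0}` and its torsion has order `|∏_{dᵢ ≠ 0} dᵢ|`.
On the other side `g_A(1 + t) = det (B - t A) = det L * det (D - t L⁻¹ A)`, and the coefficient
of `t ^ z` in `det (D - t L⁻¹ A)` is divisible by `∏_{dᵢ ≠ 0} dᵢ`. Since `δ(A) = 0`, this
coefficient is `g_A*(1)`, nonzero because `g_A(0) = 1`.
-/

open Finset

theorem Polynomial.taylor_coeff_rootMultiplicity_ne_zero {R : Type*} [CommRing R] {p : R[X]}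
    (hp : p ≠ 0) (t : R) : (taylor t p).coeff (p.rootMultiplicity t) ≠ 0 := by
  rw [rootMultiplicity_eq_natTrailingDegree, ← taylor_apply]
  exact trailingCoeff_nonzero_iff_nonzero.mpr ((taylor_injective t).ne_iff' (map_zero _) |>.mpr hp)

namespace Matrix

variable {ι R : Type*} [Fintype ι] [DecidableEq ι] [CommRing R]

theorem prod_dvd_det_of_dvd_row (d : ι → R) (N : Matrix ι ι R) (h : ∀ i j, d i ∣ N i j) :
    (∏ i, d i) ∣ N.det := by
  choose N' hN' using h
  have hN : N = diagonal d * of N' := by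
    ext i j
    simp [diagonal_mul, hN']
  rw [hN, det_mul, det_diagonal]
  exact dvd_mul_right _ _

/-- The rows with `d i = 0` vanish in `N`, so `X` can be pulled out of each of them; the
coefficient then becomes the constant term of what is left. -/
theorem prod_dvd_coeff_det_sub_X_smul [DecidableEq R] (d : ι → R) (N M : Matrix ι ι R)
    (h : ∀ i j, d i ∣ N i j) :
    (∏ i with d i ≠ 0, d i) ∣ (N.map C - (X : R[X]) • M.map C).det.coeff #{i | d i = 0} := by
  set E : Matrix ι ι R[X] :=
    of fun i j => if d i = 0 then -C (M i j) else C (N i j) - X * C (M i j)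
  have hfactor : N.map C - (X : R[X]) • M.map C =
      diagonal (fun i => if d i = 0 then X else 1) * E := by
    ext i j : 1
    by_cases hi : d i = 0
    · simp [E, hi, zero_dvd_iff.mp (hi ▸ h i j)]
    · simp [E, hi]
  have hE : E.det.eval 0 = (of fun i j => if d i = 0 then -M i j else N i j).det := by
    rw [← coe_evalRingHom, RingHom.map_det]
    congr 1
    ext i j : 1
    by_cases hi : d i = 0 <;> simp [E, hi]
  rw [hfactor, det_mul, det_diagonal, prod_ite, prod_const_one, mul_one, prod_const,
    coeff_X_pow_mul', if_pos le_rfl, Nat.sub_self, coeff_zero_eq_eval_zero, hE, prod_filter]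
  refine prod_dvd_det_of_dvd_row _ _ fun i j => ?_
  by_cases hi : d i = 0 <;> simp [hi, h i j]

theorem prod_dvd_coeff_det_sub_X_smul_of_eq_mul [DecidableEq R] (d : ι → R)
    {B L N : Matrix ι ι R} (hB : B = L * N) (hL : IsUnit L.det) (h : ∀ i j, d i ∣ N i j)
    (M : Matrix ι ι R) :
    (∏ i with d i ≠ 0, d i) ∣ (B.map C - (X : R[X]) • M.map C).det.coeff #{i | d i = 0} := by
  have hfactor : B.map C - (X : R[X]) • M.map C =
      L.map C * (N.map C - (X : R[X]) • (L⁻¹ * M).map C) := by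
    rw [hB, Matrix.mul_sub, Matrix.mul_smul, ← Matrix.map_mul, ← Matrix.map_mul, ← Matrix.mul_assoc,
      mul_nonsing_inv _ hL, Matrix.one_mul]
  rw [hfactor, det_mul, ← RingHom.mapMatrix_apply, ← RingHom.map_det, coeff_C_mul]
  exact dvd_mul_of_dvd_right (prod_dvd_coeff_det_sub_X_smul d N _ h) _

theorem taylor_charpolyRev (A : Matrix ι ι R) (t : R) :
    taylor t A.charpolyRev = ((1 - t • A).map C - (X : R[X]) • A.map C).det := by
  rw [taylor_apply, comp_eq_aeval, charpolyRev, AlgHom.map_det]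
  congr 1
  ext i j : 1
  by_cases hij : i = j <;> simp [hij, smul_eq_mul] <;> ring

theorem charpolyRev_ne_zero [Nontrivial R] (A : Matrix ι ι R) : A.charpolyRev ≠ 0 :=
  fun h => by simpa [h] using A.eval_charpolyRev

end Matrix

namespace Submodule

theorem torsion_pi {ι R : Type*} [Finite ι] [CommRing R] {M : ι → Type*}
    [∀ i, AddCommGroup (M i)] [∀ i, Module R (M i)] :
    torsion R (∀ i, M i) = pi Set.univ fun i => torsion R (M i) := by
  classical
  cases nonempty_fintype ι
  ext x
  simp only [mem_pi, Set.mem_univ, true_imp_iff, mem_torsion_iff]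
  constructor
  · rintro ⟨a, ha⟩ i
    exact ⟨a, congrFun ha i⟩
  · intro h
    choose a ha using h
    refine ⟨∏ i, a i, funext fun i => ?_⟩
    rw [Pi.smul_apply, ← prod_erase_mul _ _ (mem_univ i), mul_smul, ha, smul_zero,
      Pi.zero_apply]

theorem natCard_pi {ι R : Type*} [Fintype ι] [Semiring R] {M : ι → Type*}
    [∀ i, AddCommMonoid (M i)] [∀ i, Module R (M i)] (p : ∀ i, Submodule R (M i)) :
    Nat.card (pi Set.univ p) = ∏ i, Nat.card (p i) := by
  rw [← Nat.card_pi]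
  exact Nat.card_congr ⟨fun x i => ⟨x.1 i, x.2 i (Set.mem_univ i)⟩,
    fun y => ⟨fun i => y i, fun i _ => (y i).2⟩, fun _ => rfl, fun _ => rfl⟩

variable {R : Type*} [CommRing R]

theorem torsion_quotient_span_singleton_of_mem_nonZeroDivisors {d : R}
    (hd : d ∈ nonZeroDivisors R) : torsion R (R ⧸ Ideal.span {d}) = ⊤ := by
  refine eq_top_iff.mpr fun x _ => (mem_torsion_iff x).mpr ⟨⟨d, hd⟩, ?_⟩
  obtain ⟨w, rfl⟩ := Quotient.mk_surjective _ x
  rw [Submonoid.smul_def, ← Quotient.mk_smul, Quotient.mk_eq_zero]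
  exact Ideal.mem_span_singleton.mpr (Dvd.intro w rfl)

theorem torsion_quotient_span_zero [IsDomain R] : torsion R (R ⧸ Ideal.span {(0 : R)}) = ⊥ := by
  refine eq_bot_iff.mpr fun x hx => ?_
  obtain ⟨a, ha⟩ := (mem_torsion_iff x).mp hx
  obtain ⟨w, rfl⟩ := Quotient.mk_surjective _ x
  rw [Submonoid.smul_def, ← Quotient.mk_smul, Quotient.mk_eq_zero,
    Ideal.span_singleton_eq_bot.mpr rfl, mem_bot, smul_eq_mul, mul_eq_zero] at ha
  rw [mem_bot, ha.resolve_left (nonZeroDivisors.coe_ne_zero a), Quotient.mk_zero]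

theorem map_torsion_linearEquiv {M N : Type*} [AddCommGroup M] [Module R M] [AddCommGroup N]
    [Module R N] (e : M ≃ₗ[R] N) : (torsion R M).map (e : M →ₗ[R] N) = torsion R N := by
  ext y
  simp only [mem_map_equiv, mem_torsion_iff, Submonoid.smul_def, ← map_smul,
    LinearEquiv.map_eq_zero_iff]

end Submodule

theorem LinearEquiv.natCard_torsion {R M N : Type*} [CommRing R] [AddCommGroup M]
    [Module R M] [AddCommGroup N] [Module R N] (e : M ≃ₗ[R] N) :
    Nat.card (Submodule.torsion R M) = Nat.card (Submodule.torsion R N) :=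
  Nat.card_congr (e.ofSubmodules _ _ (Submodule.map_torsion_linearEquiv e)).toEquiv

theorem Int.natCard_torsion_quotient_span_singleton (d : ℤ) :
    Nat.card (Submodule.torsion ℤ (ℤ ⧸ Ideal.span {d})) = if d ≠ 0 then d.natAbs else 1 := by
  split_ifs with hd
  · rw [Submodule.torsion_quotient_span_singleton_of_mem_nonZeroDivisors
      (mem_nonZeroDivisors_of_ne_zero hd), Nat.card_congr Submodule.topEquiv.toEquiv,
      Nat.card_congr (Int.quotientSpanEquivZMod d).toEquiv, Nat.card_zmod]
  · rw [not_not.mp hd, Submodule.torsion_quotient_span_zero]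
    exact Nat.card_unique

theorem Int.natCard_torsion_pi_quotient_span_singleton {ι : Type*} [Fintype ι] (d : ι → ℤ) :
    Nat.card (Submodule.torsion ℤ (∀ i, ℤ ⧸ Ideal.span {d i})) =
      (∏ i with d i ≠ 0, d i).natAbs := by
  rw [Submodule.torsion_pi, Submodule.natCard_pi, ← Int.natAbsHom_apply, map_prod, prod_filter]
  exact prod_congr rfl fun i _ => natCard_torsion_quotient_span_singleton (d i)

namespace Module.Basis.SmithNormalForm

variable {R M ι : Type*} [CommRing R] [AddCommGroup M] [Module R M] {N : Submodule R M} {k : ℕ}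
  (snf : Basis.SmithNormalForm N ι k)

/-- The Smith coefficients indexed by the basis of `M`: `snf.a i` at `snf.f i`, and `0` at the
basis vectors that do not contribute to `N`. -/
noncomputable def coeffs : ι → R := Function.extend snf.f snf.a 0

theorem coeffs_apply_embedding (i : Fin k) : snf.coeffs (snf.f i) = snf.a i :=
  snf.f.injective.extend_apply _ _ i

theorem coeffs_eq_zero_of_notMem_range {i : ι} (hi : i ∉ Set.range snf.f) : snf.coeffs i = 0 :=
  Function.extend_apply' _ _ _ fun ⟨j, hj⟩ => hi ⟨j, hj⟩

theorem coeffs_ne_zero_iff [Nontrivial R] {i : ι} : snf.coeffs i ≠ 0 ↔ i ∈ Set.range snf.f := by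
  refine ⟨not_imp_comm.mp snf.coeffs_eq_zero_of_notMem_range, ?_⟩
  rintro ⟨j, rfl⟩ h
  have hbN := snf.snf j
  rw [← coeffs_apply_embedding, h, zero_smul] at hbN
  exact snf.bN.ne_zero j (Subtype.coe_injective hbN)

theorem coeffs_smul_mem (i : ι) : snf.coeffs i • snf.bM i ∈ N := by
  by_cases hi : i ∈ Set.range snf.f
  · obtain ⟨j, rfl⟩ := hi
    rw [coeffs_apply_embedding, ← snf.snf]
    exact (snf.bN j).2
  · rw [coeffs_eq_zero_of_notMem_range snf hi, zero_smul]
    exact N.zero_mem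

theorem coeffs_dvd_repr {x : M} (hx : x ∈ N) (i : ι) : snf.coeffs i ∣ snf.bM.repr x i := by
  by_cases hi : i ∈ Set.range snf.f
  · obtain ⟨j, rfl⟩ := hi
    rw [coeffs_apply_embedding, snf.repr_apply_embedding_eq_repr_smul ⟨x, hx⟩, map_smul]
    exact Dvd.intro _ rfl
  · rw [snf.repr_eq_zero_of_notMem_range ⟨x, hx⟩ hi]
    exact dvd_zero _

variable [Fintype ι]

theorem mem_iff_forall_coeffs_dvd_repr (x : M) :
    x ∈ N ↔ ∀ i, snf.coeffs i ∣ snf.bM.repr x i := by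
  refine ⟨fun hx => snf.coeffs_dvd_repr hx, fun h => ?_⟩
  choose c hc using h
  rw [← snf.bM.sum_repr x]
  refine N.sum_mem fun i _ => ?_
  rw [hc, mul_comm, mul_smul]
  exact N.smul_mem _ (snf.coeffs_smul_mem i)

theorem map_equivFun_eq_pi :
    N.map (snf.bM.equivFun : M →ₗ[R] ι → R) =
      Submodule.pi Set.univ fun i => Ideal.span {snf.coeffs i} := by
  ext x
  simp only [Submodule.mem_map_equiv, Submodule.mem_pi, Set.mem_univ, true_imp_iff,
    Ideal.mem_span_singleton, snf.mem_iff_forall_coeffs_dvd_repr, ← Basis.equivFun_apply,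
    LinearEquiv.apply_symm_apply]

noncomputable def quotientEquivPi [DecidableEq ι] :
    (M ⧸ N) ≃ₗ[R] ∀ i, R ⧸ Ideal.span {snf.coeffs i} :=
  (Submodule.Quotient.equiv _ _ _ snf.map_equivFun_eq_pi).trans (Submodule.quotientPi _)

theorem card_coeffs_eq_zero [DecidableEq R] [Nontrivial R] :
    #{i | snf.coeffs i = 0} = Fintype.card ι - k := by
  have hne : ({i | snf.coeffs i ≠ 0} : Finset ι) = univ.map snf.f := by
    ext i
    simp only [mem_filter, mem_univ, true_and, snf.coeffs_ne_zero_iff, mem_map, Set.mem_range]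
  have hcard := card_filter_add_card_filter_not (s := univ) (fun i => snf.coeffs i = 0)
  rw [hne, card_map, card_fin, card_univ] at hcard
  omega

theorem finrank_quotient_eq_card_coeffs_eq_zero [DecidableEq R] [IsDomain R] :
    finrank R (M ⧸ N) = #{i | snf.coeffs i = 0} := by
  have : Module.Finite R M := Module.Finite.of_basis snf.bM
  rw [snf.card_coeffs_eq_zero, ← finrank_eq_card_basis snf.bM, ← N.finrank_quotient_add_finrank,
    finrank_eq_card_basis snf.bN, Fintype.card_fin, Nat.add_sub_cancel]

end Module.Basis.SmithNormalForm

theorem Matrix.exists_eq_mul_of_smithNormalForm {ι R : Type*} [Fintype ι] [DecidableEq ι]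
    [CommRing R] {k : ℕ} (B : Matrix ι ι R)
    (snf : Module.Basis.SmithNormalForm (LinearMap.range B.toLin') ι k) :
    ∃ L N : Matrix ι ι R, IsUnit L.det ∧ B = L * N ∧ ∀ i j, snf.coeffs i ∣ N i j := by
  have hcol (j : ι) : B.col j ∈ LinearMap.range B.toLin' :=
    ⟨Pi.single j 1, by rw [toLin'_apply, mulVec_single_one]⟩
  let _ := (Pi.basisFun R ι).invertibleToMatrix snf.bM
  refine ⟨(Pi.basisFun R ι).toMatrix snf.bM, of fun i j => snf.bM.repr (B.col j) i,
    isUnit_det_of_invertible _, ?_, fun i j => snf.coeffs_dvd_repr (hcol j) i⟩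
  ext i j
  conv_lhs => rw [← B.col_apply j i, ← snf.bM.sum_repr (B.col j)]
  simp [mul_apply, Module.Basis.toMatrix_apply, mul_comm]

theorem revCharPoly_eq_charpolyRev {n : ℕ} (A : Matrix (Fin n) (Fin n) ℤ) :
    revCharPoly A = A.charpolyRev :=
  rfl

theorem stmt3_general {n : ℕ} (A : Matrix (Fin n) (Fin n) ℤ)
    (hδ : (revCharPoly A).rootMultiplicity 1 = Module.finrank ℤ (BFGroup A)) :
    ∃ m : ℤ, m ≠ 0 ∧
      (Polynomial.taylor 1 (revCharPoly A)).coeff ((revCharPoly A).rootMultiplicity 1) =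
        m * (Nat.card (Submodule.torsion ℤ (BFGroup A)) : ℤ) := by
  obtain ⟨k, snf⟩ := (LinearMap.range (Matrix.toLin' (1 - A))).smithNormalForm
    (Pi.basisFun ℤ (Fin n))
  obtain ⟨L, N, hL, hB, hN⟩ := Matrix.exists_eq_mul_of_smithNormalForm (1 - A) snf
  set P := ∏ i with snf.coeffs i ≠ 0, snf.coeffs i
  have hrank : (revCharPoly A).rootMultiplicity 1 = #{i | snf.coeffs i = 0} := by
    rw [hδ, snf.finrank_quotient_eq_card_coeffs_eq_zero]
  have htors : Nat.card (Submodule.torsion ℤ (BFGroup A)) = P.natAbs := by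
    rw [snf.quotientEquivPi.natCard_torsion, Int.natCard_torsion_pi_quotient_span_singleton]
  have hg : taylor 1 (revCharPoly A) = ((1 - A).map C - (X : ℤ[X]) • A.map C).det := by
    rw [revCharPoly_eq_charpolyRev, Matrix.taylor_charpolyRev, one_smul]
  obtain ⟨m, hm⟩ : P ∣ (taylor 1 (revCharPoly A)).coeff ((revCharPoly A).rootMultiplicity 1) := by
    rw [hg, hrank]
    exact Matrix.prod_dvd_coeff_det_sub_X_smul_of_eq_mul _ hB hL hN A
  have hne : (taylor 1 (revCharPoly A)).coeff ((revCharPoly A).rootMultiplicity 1) ≠ 0 :=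
    taylor_coeff_rootMultiplicity_ne_zero A.charpolyRev_ne_zero 1
  rw [hm, mul_ne_zero_iff] at hne
  refine ⟨P.sign * m, mul_ne_zero (Int.sign_eq_zero_iff_zero.not.mpr hne.1) hne.2, ?_⟩
  rw [hm, htors, mul_right_comm, Int.sign_mul_natAbs, mul_comm]

/-- Paper's Theorem `the_special_value`: if `δ(A) = 0`, i.e. the order of vanishing `r_A` of
`g_A(u) = det(I − u·A)` at `u = 1` equals the free rank of `BF(A)`, then there is a nonzero
integer `m(A)` with `g_A*(1) = m(A) · #BF(A)_tors`. -/
theorem stmt3 {n : ℕ} (A : Matrix (Fin n) (Fin n) ℤ) (hA : ∀ i j, 0 ≤ A i j)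
    (hδ : (revCharPoly A).rootMultiplicity 1 = Module.finrank ℤ (BFGroup A)) :
    ∃ m : ℤ, m ≠ 0 ∧
      (Polynomial.taylor 1 (revCharPoly A)).coeff ((revCharPoly A).rootMultiplicity 1) =
        m * (Nat.card (Submodule.torsion ℤ (BFGroup A)) : ℤ) :=
  stmt3_general A hδ
end

section
/- Let A be an m×m integer matrix and A' an n×n integer matrix, both with nonnegative entries, and let φ : ℤᵐ → ℤⁿ be a surjective ℤ-linear map satisfying φ ∘ A = A' ∘ φ (the situation induced by a covering map of strongly connected finite digraphs Y → X, where A, A' are the adjacency matrices of Y, X and φ is the induced map on vertex groups). Then g_{A'}*(1) divides g_A*(1) in ℤ. (First assertion of the paper's Theorem 'divi_pro'.) -/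
open Polynomial

/-- The first nonvanishing Taylor coefficient `g_A*(1)` of `g_A` at `u = 1`. -/
noncomputable def specialValue {n : ℕ} (A : Matrix (Fin n) (Fin n) ℤ) : ℤ :=
  (Polynomial.taylor 1 (revCharPoly A)).coeff ((revCharPoly A).rootMultiplicity 1)

/-!
The intertwining relation makes `ker φ` invariant under `A`, and `φ` identifies the induced map
on `ℤᵐ ⧸ ker φ` with `A'`. Splitting `ℤᵐ` along the free submodule `ker φ` and a lift of a basis of
the quotient puts `A` in block upper triangular form, so `charpoly A' ∣ charpoly A`. Reversing
gives `g_{A'} ∣ g_A`, and `g*(1)` is the trailing coefficient of the Taylor expansion at `1`,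
which is multiplicative over `ℤ`.
-/

namespace Polynomial

theorem reverse_dvd_reverse {R : Type*} [CommSemiring R] [NoZeroDivisors R]
    {p q : R[X]} (h : p ∣ q) : p.reverse ∣ q.reverse := by
  obtain ⟨r, rfl⟩ := h
  rw [reverse_mul_of_domain]
  exact dvd_mul_right _ _

theorem coeff_taylor_rootMultiplicity {R : Type*} [CommRing R] (a : R) (p : R[X]) :
    (taylor a p).coeff (p.rootMultiplicity a) = (taylor a p).trailingCoeff := by
  rw [rootMultiplicity_eq_natTrailingDegree, ← taylor_apply]
  rfl

end Polynomial

theorem LinearMap.charpoly_eq_charpoly_restrict_mul_charpoly_mapQ {R V : Type*} [CommRing R]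
    [AddCommGroup V] [Module R V] [Module.Free R V] [Module.Finite R V]
    (W : Submodule R V) [Module.Free R W] [Module.Finite R W]
    [Module.Free R (V ⧸ W)]
    (f : V →ₗ[R] V) (hf : W ≤ W.comap f) :
    f.charpoly = (f.restrict hf).charpoly * (W.mapQ W f hf).charpoly := by
  classical
  let bW := Module.Free.chooseBasis R W
  let bQ := Module.Free.chooseBasis R (V ⧸ W)
  let b := bW.sumQuot bQ
  suffices LinearMap.toMatrix b b f = Matrix.fromBlocks (LinearMap.toMatrix bW bW (f.restrict hf))
      (Matrix.of fun i j ↦ b.repr (f (b (Sum.inr j))) (Sum.inl i)) 0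
      (LinearMap.toMatrix bQ bQ (W.mapQ W f hf)) by
    rw [← f.charpoly_toMatrix b, this, Matrix.charpoly_fromBlocks_zero₂₁,
      LinearMap.charpoly_toMatrix, LinearMap.charpoly_toMatrix]
  ext (i | i) (j | j)
  · simp only [LinearMap.toMatrix_apply, Matrix.fromBlocks_apply₁₁, b, bW.sumQuot_inl]
    exact bW.sumQuot_repr_inl_of_mem bQ _ (hf (bW j).2) i
  · simp [b, LinearMap.toMatrix_apply]
  · simp [b, LinearMap.toMatrix_apply, (Submodule.Quotient.mk_eq_zero W).mpr (hf (bW j).2)]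
  · simp only [LinearMap.toMatrix_apply, Matrix.fromBlocks_apply₂₂, b,
      Module.Basis.sumQuot_repr_inr, ← Module.Basis.sumQuot_inr bW bQ j, Submodule.mapQ_apply]
    rfl

theorem LinearMap.charpoly_dvd_charpoly_of_surjective_of_comp_eq {R M M' : Type*} [CommRing R]
    [IsDomain R] [IsPrincipalIdealRing R]
    [AddCommGroup M] [Module R M] [Module.Free R M] [Module.Finite R M]
    [AddCommGroup M'] [Module R M'] [Module.Free R M'] [Module.Finite R M']
    (f : M →ₗ[R] M) (f' : M' →ₗ[R] M') (φ : M →ₗ[R] M') (hφ : Function.Surjective φ)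
    (hcomm : φ ∘ₗ f = f' ∘ₗ φ) :
    f'.charpoly ∣ f.charpoly := by
  have hf : ker φ ≤ (ker φ).comap f := fun x hx ↦ by
    rw [Submodule.mem_comap, mem_ker, ← comp_apply, hcomm, comp_apply, mem_ker.mp hx, map_zero]
  let e := φ.quotKerEquivOfSurjective hφ
  have : Module.Free R (M ⧸ ker φ) := Module.Free.of_equiv e.symm
  have he : e.conj ((ker φ).mapQ (ker φ) f hf) = f' := by
    ext x
    obtain ⟨y, rfl⟩ := e.surjective x
    induction y using Submodule.Quotient.induction_on
    simp only [e, LinearEquiv.conj_apply, coe_comp, LinearEquiv.coe_coe, Function.comp_apply,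
      quotKerEquivOfSurjective_symm_apply, Submodule.mapQ_apply, quotKerEquivOfSurjective_apply_mk]
    exact LinearMap.congr_fun hcomm _
  -- `ker φ` is free of finite rank by the instances for submodules over a PID.
  rw [f.charpoly_eq_charpoly_restrict_mul_charpoly_mapQ (ker φ) hf, ← he,
    LinearEquiv.charpoly_conj]
  exact dvd_mul_left _ _

theorem specialValue_eq_trailingCoeff {n : ℕ} (A : Matrix (Fin n) (Fin n) ℤ) :
    specialValue A = (taylor 1 A.charpolyRev).trailingCoeff :=
  coeff_taylor_rootMultiplicity 1 A.charpolyRev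

theorem specialValue_dvd_specialValue_of_charpoly_dvd {m n : ℕ} {A : Matrix (Fin m) (Fin m) ℤ}
    {A' : Matrix (Fin n) (Fin n) ℤ} (h : A'.charpoly ∣ A.charpoly) :
    specialValue A' ∣ specialValue A := by
  rw [specialValue_eq_trailingCoeff, specialValue_eq_trailingCoeff, ← Matrix.reverse_charpoly,
    ← Matrix.reverse_charpoly]
  obtain ⟨q, hq⟩ := reverse_dvd_reverse h
  rw [hq, taylor_mul, trailingCoeff_mul]
  exact dvd_mul_right _ _

theorem stmt6_general {m n : ℕ} (A : Matrix (Fin m) (Fin m) ℤ) (A' : Matrix (Fin n) (Fin n) ℤ)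
    (φ : (Fin m → ℤ) →ₗ[ℤ] (Fin n → ℤ)) (hφ : Function.Surjective φ)
    (hcomm : φ.comp (Matrix.toLin' A) = (Matrix.toLin' A').comp φ) :
    specialValue A' ∣ specialValue A := by
  apply specialValue_dvd_specialValue_of_charpoly_dvd
  rw [← Matrix.charpoly_toLin' A, ← Matrix.charpoly_toLin' A']
  exact (Matrix.toLin' A).charpoly_dvd_charpoly_of_surjective_of_comp_eq _ φ hφ hcomm

/-- First assertion of the paper's Theorem `divi_pro`: for a covering situation, i.e. a
surjective `ℤ`-linear map `φ : ℤᵐ → ℤⁿ` intertwining the adjacency operators of two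
nonnegative integer matrices `A` and `A'`, the special value `g_{A'}*(1)` divides
`g_A*(1)` in `ℤ`. -/
theorem stmt6 {m n : ℕ} (A : Matrix (Fin m) (Fin m) ℤ) (A' : Matrix (Fin n) (Fin n) ℤ)
    (hA : ∀ i j, 0 ≤ A i j) (hA' : ∀ i j, 0 ≤ A' i j)
    (φ : (Fin m → ℤ) →ₗ[ℤ] (Fin n → ℤ)) (hφ : Function.Surjective φ)
    (hcomm : φ.comp (Matrix.toLin' A) = (Matrix.toLin' A').comp φ) :
    specialValue A' ∣ specialValue A :=
  stmt6_general A A' φ hφ hcomm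
end

section
/- Let G be a finite abelian group, F an algebraically closed field of characteristic zero, and M an n×n matrix with entries in the group algebra F[G]. Let Λ be the matrix (with respect to any F-basis) of the F-linear endomorphism of F[G]ⁿ given by multiplication by M. Then det(I − u·Λ) = ∏_{ψ} det(I − u·ψ(M)) in F[u], where the product runs over all characters ψ : G → Fˣ and ψ(M) is the n×n matrix over F obtained by applying to each entry the F-algebra homomorphism F[G] → F induced by ψ. (This is the identity underlying the paper's Theorem 'product_dec': g_Y(u) = g_X(u)·∏_{ψ≠ψ₀} g_{Y/X}(u,ψ) for an abelian Galois cover Y/X of finite digraphs.) -/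
/-!
For `G` finite abelian and `F` with enough roots of unity, evaluation at all characters is an
`F`-algebra isomorphism `F[G] ≃ F^Ĝ`: it is injective because the functions `ψ ↦ ψ σ` are distinct
characters of the dual group, hence linearly independent (Artin), and `|Ĝ| = |G|` makes it
bijective. Transported along this isomorphism, multiplication by `M` becomes the block diagonal
matrix with blocks `ψ(M)`, and the reverse characteristic polynomial, which does not depend on the
basis, is the product of those of the blocks.
-/

open Polynomial

namespace MonoidAlgebra

variable (F G : Type*) [Field F] [CommGroup G]

noncomputable def fourier : MonoidAlgebra F G →ₐ[F] ((G →* Fˣ) → F) :=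
  AlgHom.pi fun ψ => lift F F G ((Units.coeHom F).comp ψ)

variable {F G}

theorem fourier_apply (x : MonoidAlgebra F G) (ψ : G →* Fˣ) :
    fourier F G x ψ = lift F F G ((Units.coeHom F).comp ψ) x := rfl

theorem fourier_eq_linearCombination (x : MonoidAlgebra F G) :
    fourier F G x =
      Finsupp.linearCombination F (fun σ (ψ : G →* Fˣ) => (ψ σ : F)) x.coeff := by
  ext ψ
  simp [fourier_apply, lift_apply, Finsupp.linearCombination_apply, Finsupp.sum, Finset.sum_apply]

variable [Finite G] [HasEnoughRootsOfUnity F (Monoid.exponent G)]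

theorem fourier_injective : Function.Injective (fourier F G) := by
  have hdual : Function.Injective fun σ : G => (Units.coeHom F).comp (MonoidHom.eval σ) := by
    intro σ τ h
    rw [← CommGroup.forall_apply_eq_apply_iff G (M := F)]
    intro ψ
    exact Units.ext (DFunLike.congr_fun h ψ)
  have hli := (linearIndependent_monoidHom (G →* Fˣ) F).comp _ hdual
  intro x y hxy
  rw [fourier_eq_linearCombination, fourier_eq_linearCombination] at hxy
  exact coeff_injective (hli hxy)

theorem fourier_bijective : Function.Bijective (fourier F G) := by
  have := Fintype.ofFinite G
  have := Fintype.ofFinite (G →* Fˣ)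
  refine ⟨fourier_injective, ?_⟩
  have hrank : Module.finrank F (MonoidAlgebra F G) = Module.finrank F ((G →* Fˣ) → F) := by
    rw [(coeffLinearEquiv F).finrank_eq, Module.finrank_finsupp_self,
      Module.finrank_fintype_fun_eq_card, ← Nat.card_eq_fintype_card, ← Nat.card_eq_fintype_card,
      CommGroup.card_monoidHom_of_hasEnoughRootsOfUnity]
  exact (LinearMap.injective_iff_surjective_of_finrank_eq_finrank hrank
    (f := (fourier F G).toLinearMap)).mp fourier_injective

variable (F G) in
noncomputable def fourierEquiv : MonoidAlgebra F G ≃ₐ[F] ((G →* Fˣ) → F) :=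
  AlgEquiv.ofBijective (fourier F G) fourier_bijective

end MonoidAlgebra

namespace Matrix

variable {R : Type*} [CommRing R] {m o : Type*} [Fintype m] [DecidableEq m] [Fintype o]
  [DecidableEq o]

theorem charpolyRev_blockDiagonal (A : o → Matrix m m R) :
    (blockDiagonal A).charpolyRev = ∏ k, (A k).charpolyRev := by
  simp only [charpolyRev, blockDiagonal_map _ _ (map_zero C), ← blockDiagonal_smul,
    ← blockDiagonal_one, ← blockDiagonal_sub, det_blockDiagonal, Pi.sub_apply, Pi.smul_apply,
    Pi.one_apply]

end Matrix

namespace LinearMap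

variable {R M ι : Type*} [CommRing R] [AddCommGroup M] [Module R M] [Module.Free R M]
  [Module.Finite R M] [Fintype ι] [DecidableEq ι]

theorem charpolyRev_toMatrix (f : M →ₗ[R] M) (b : Module.Basis ι R M) :
    (toMatrix b b f).charpolyRev = f.charpoly.reverse := by
  rw [← Matrix.reverse_charpoly, charpoly_toMatrix]

theorem charpoly_restrictScalars_mulVecLin {A κ m : Type*} [CommRing A] [Algebra R A]
    [Module.Free R A] [Module.Finite R A] [Fintype κ] [DecidableEq κ] [Fintype m] [DecidableEq m]
    (E : A ≃ₐ[R] (κ → R)) (N : Matrix m m A) :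
    (N.mulVecLin.restrictScalars R).charpoly =
      (Matrix.blockDiagonal fun k => N.map fun a => E a k).charpoly := by
  let ε : (m → A) ≃ₗ[R] (m × κ → R) :=
    (LinearEquiv.piCongrRight fun _ => E.toLinearEquiv).trans (LinearEquiv.curry R R m κ).symm
  rw [← ε.charpoly_conj, ← Matrix.charpoly_toLin']
  congr 1
  refine LinearMap.ext fun x => funext fun ⟨i, k⟩ => ?_
  simp [ε, LinearEquiv.conj_apply, Matrix.mulVec, dotProduct, Matrix.blockDiagonal_apply,
    Fintype.sum_prod_type]

end LinearMap

/-- The identity underlying the paper's Theorem `product_dec` (Artin formalism for the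
equivariant zeta function): for a finite abelian group `G`, an algebraically closed field `F`
of characteristic zero, and a matrix `M` over the group algebra `F[G]`, the reverse
characteristic polynomial of the `F`-linear endomorphism of `F[G]ⁿ` given by multiplication
by `M` (computed via its matrix `Λ` in any `F`-basis) is the product over all characters
`ψ : G → Fˣ` of the reverse characteristic polynomials of the matrices `ψ(M)`. -/
theorem stmt8 {G : Type*} [CommGroup G] [Fintype G]
    (F : Type*) [Field F] [IsAlgClosed F] [CharZero F]
    [Fintype (G →* Fˣ)]
    {n : ℕ} (M : Matrix (Fin n) (Fin n) (MonoidAlgebra F G))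
    {ι : Type*} [Fintype ι] [DecidableEq ι]
    (b : Module.Basis ι F (Fin n → MonoidAlgebra F G))
    (Λ : Matrix ι ι F)
    (hΛ : Λ = LinearMap.toMatrix b b ((Matrix.mulVecLin M).restrictScalars F)) :
    Matrix.det ((1 : Matrix ι ι (Polynomial F)) - (X : Polynomial F) • Λ.map C) =
      ∏ ψ : G →* Fˣ,
        Matrix.det ((1 : Matrix (Fin n) (Fin n) (Polynomial F)) -
          (X : Polynomial F) •
            (M.map ⇑((MonoidAlgebra.lift F F G) ((Units.coeHom F).comp ψ))).map C) := by
  classical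
  -- with `IsAlgClosed F`, this yields `HasEnoughRootsOfUnity F (Monoid.exponent G)`
  have : NeZero (Monoid.exponent G : F) :=
    ⟨Nat.cast_ne_zero.mpr Monoid.exponent_ne_zero_of_finite⟩
  change Λ.charpolyRev = ∏ ψ, Matrix.charpolyRev _
  rw [hΛ, LinearMap.charpolyRev_toMatrix,
    LinearMap.charpoly_restrictScalars_mulVecLin (MonoidAlgebra.fourierEquiv F G),
    Matrix.reverse_charpoly, Matrix.charpolyRev_blockDiagonal]
  rfl
end

section
/- Let X be a digraph (a quiver) that is strongly connected, G a group, α a voltage assignment on X (an assignment of an element α(e) ∈ G to every edge e of X), and v₀ a vertex of X. Let Y = X(G,α) be the derived digraph: its vertices are pairs (v,σ) with v a vertex of X and σ ∈ G, and for every edge e : a ⟶ b of X and every σ ∈ G there is an edge (a,σ) ⟶ (b, σ·α(e)). Extend α multiplicatively to paths by α(e₁⋯e_m) = α(e₁)⋯α(e_m). Then Y is strongly connected if and only if the map from closed paths at v₀ to G sending γ to α(γ) is surjective, i.e. every element of G equals α(γ) for some directed path γ from v₀ to v₀. (Paper's Proposition 'connectedness'.) -/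
/-- The derived digraph `X(G,α)` of a voltage assignment `α` with values in a group `G`:
vertices are pairs `(v, σ)`, and each edge `e : a ⟶ b` of `X` together with `σ ∈ G` yields
an edge `(a, σ) ⟶ (b, σ · α e)`. -/
def derivedQuiver {V : Type*} [Quiver V] {G : Type*} [Group G]
    (α : ∀ a b : V, (a ⟶ b) → G) : Quiver (V × G) :=
  ⟨fun x y => { e : x.1 ⟶ y.1 // y.2 = x.2 * α x.1 y.1 e }⟩

/-- The multiplicative extension of a voltage assignment to paths:
`α(e₁ ⋯ e_m) = α(e₁) ⋯ α(e_m)`. -/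
def pathVoltage {V : Type*} [Quiver V] {G : Type*} [Group G]
    (α : ∀ a b : V, (a ⟶ b) → G) : ∀ {a b : V}, Quiver.Path a b → G
  | _, _, Quiver.Path.nil => 1
  | _, _, Quiver.Path.cons (b := c) (c := d) p e => pathVoltage α p * α c d e

/-- Lift a base path to a derived path starting at any group element. -/
lemma derived_lift {V : Type*} [Quiver V] {G : Type*} [Group G]
    (α : ∀ a b : V, (a ⟶ b) → G) {a b : V} (p : Quiver.Path a b) (σ : G) :
    Nonempty (@Quiver.Path (V × G) (derivedQuiver α) (a, σ) (b, σ * pathVoltage α p)) := by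
  letI := derivedQuiver α
  induction p with
  | nil => exact ⟨by rw [show σ * pathVoltage α (Quiver.Path.nil (a := a)) = σ by
      simp [pathVoltage]]; exact Quiver.Path.nil⟩
  | cons p e ih =>
      obtain ⟨q⟩ := ih
      refine ⟨q.cons ?_⟩
      exact ⟨e, by simp [pathVoltage, mul_assoc]⟩

/-- Project a derived path to a base path with matching voltage. -/
lemma derived_proj {V : Type*} [Quiver V] {G : Type*} [Group G]
    (α : ∀ a b : V, (a ⟶ b) → G) {x y : V × G}
    (q : @Quiver.Path (V × G) (derivedQuiver α) x y) :
    ∃ p : Quiver.Path x.1 y.1, y.2 = x.2 * pathVoltage α p := by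
  letI := derivedQuiver α
  induction q with
  | nil => exact ⟨Quiver.Path.nil, by simp [pathVoltage]⟩
  | cons q e ih =>
      obtain ⟨p, hp⟩ := ih
      refine ⟨p.cons e.1, ?_⟩
      simp only [pathVoltage]
      conv_lhs => rw [e.2]
      exact (congrArg (· * α _ _ e.1) hp).trans (mul_assoc _ _ _)

/-- Paper's Proposition `connectedness`: for a strongly connected digraph `X`, a group `G`,
a voltage assignment `α` and a base vertex `v₀`, the derived digraph `X(G,α)` is strongly
connected if and only if every element of `G` is the voltage of some closed path at `v₀`. -/
theorem stmt9 {V : Type*} [Quiver V] {G : Type*} [Group G]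
    (α : ∀ a b : V, (a ⟶ b) → G)
    (hX : ∀ a b : V, Nonempty (Quiver.Path a b)) (v₀ : V) :
    (∀ w₁ w₂ : V × G, Nonempty (@Quiver.Path (V × G) (derivedQuiver α) w₁ w₂)) ↔
      ∀ σ : G, ∃ γ : Quiver.Path v₀ v₀, pathVoltage α γ = σ := by
  constructor
  · intro h σ
    obtain ⟨q⟩ := h (v₀, 1) (v₀, σ)
    obtain ⟨p, hp⟩ := derived_proj α q
    exact ⟨p, by simpa using hp.symm⟩
  · rintro h ⟨a, σ⟩ ⟨b, τ⟩
    obtain ⟨p⟩ := hX a v₀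
    obtain ⟨q⟩ := hX v₀ b
    obtain ⟨γ, hγ⟩ := h ((σ * pathVoltage α p)⁻¹ * (τ * (pathVoltage α q)⁻¹))
    obtain ⟨P⟩ := derived_lift α ((p.comp γ).comp q) σ
    have : σ * pathVoltage α ((p.comp γ).comp q) = τ := by
      have hcomp : ∀ {x y z : V} (r : Quiver.Path x y) (s : Quiver.Path y z),
          pathVoltage α (r.comp s) = pathVoltage α r * pathVoltage α s := by
        intro x y z r s
        induction s with
        | nil => simp [pathVoltage]
        | cons s e ih => simp [pathVoltage, ih, mul_assoc]
      rw [hcomp, hcomp, hγ]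
      group
    exact ⟨this ▸ P⟩
end

section
/- Let X, Y, Z be digraphs (quivers) with Z strongly connected. Let f : Y → X be a covering morphism of digraphs (for every vertex w of Y, f restricts to bijections from the set of edges with origin w onto the set of edges with origin f(w), and from the set of edges with terminus w onto the set of edges with terminus f(w)). Let q, s : Z → Y be morphisms of digraphs with f ∘ q = f ∘ s. If there exists a vertex w of Z with q(w) = s(w), then q = s. (Paper's Theorem 'unique lifting property'.) -/
lemma star_inj_aux {Y X : Type*} [Quiver Y] [Quiver X] (f : Y ⥤q X) (hf : f.IsCovering)
    {u v b1 b2 : Y} (huv : u = v) (e1 : u ⟶ b1) (e2 : v ⟶ b2)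
    (hb : f.obj b1 = f.obj b2) (he : HEq (f.map e1) (f.map e2)) :
    b1 = b2 ∧ HEq e1 e2 := by
  subst huv
  have : f.star u ⟨b1, e1⟩ = f.star u ⟨b2, e2⟩ := by
    simp only [Prefunctor.star, Quiver.Star.mk]
    exact Sigma.ext hb he
  have := (hf.star_bijective u).injective this
  exact ⟨congrArg Sigma.fst this, (Sigma.mk.inj_iff.mp this).2⟩

/-- Paper's Theorem `unique_lifting_prop` (unique lifting property): let `X, Y, Z` be
digraphs with `Z` strongly connected, `f : Y → X` a covering morphism of digraphs, and
`q, s : Z → Y` morphisms with `f ∘ q = f ∘ s`. If `q` and `s` agree on one vertex of `Z`,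
then `q = s`. -/
theorem stmt10 {X Y Z : Type*} [Quiver X] [Quiver Y] [Quiver Z]
    (hZ : ∀ a b : Z, Nonempty (Quiver.Path a b))
    (f : Y ⥤q X) (hf : f.IsCovering)
    (q s : Z ⥤q Y) (h : q ⋙q f = s ⋙q f)
    (w : Z) (hw : q.obj w = s.obj w) : q = s := by
  have key : ∀ {a b : Z} (e : a ⟶ b), q.obj a = s.obj a →
      q.obj b = s.obj b ∧ HEq (q.map e) (s.map e) := by
    intro a b e hab
    apply star_inj_aux f hf hab (q.map e) (s.map e)
    · exact congrFun (congrArg Prefunctor.obj h) b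
    · show HEq ((q ⋙q f).map e) ((s ⋙q f).map e)
      rw [h]
  have hobj : ∀ a : Z, q.obj a = s.obj a := by
    intro a
    obtain ⟨p⟩ := hZ w a
    induction p with
    | nil => exact hw
    | cons p e ih => exact (key e ih).1
  have hmap : ∀ {a b : Z} (e : a ⟶ b), HEq (q.map e) (s.map e) :=
    fun e => (key e (hobj _)).2
  obtain ⟨qo, qm⟩ := q
  obtain ⟨so, sm⟩ := s
  have : qo = so := funext hobj
  subst this
  congr 1
  funext a b e
  exact eq_of_heq (hmap e)
end

section
/- Let p be an odd prime, Δ⁺ = (ℤ/pℤ)ˣ/⟨σ_{−1}⟩ (a cyclic group of order (p−1)/2), and N⁺ = Σ_{τ∈Δ⁺} τ ∈ ℤ[Δ⁺]. Then the quotient ℤ-module ℤ[Δ⁺]/(p·N⁺·ℤ[Δ⁺]) is isomorphic, as an abelian group, to ℤ^{(p−3)/2} ⊕ ℤ/pℤ. (Paper's Proposition 'bf_plus': BF(Y⁺) ≅ ℤ^{(p−3)/2} ⊕ ℤ/pℤ, since the Bowen–Franks operator of Y⁺ is multiplication by −p·N⁺ on ℤ[Δ⁺].) -/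
/-- The group `Δ⁺ = (ℤ/pℤ)ˣ/⟨σ₋₁⟩`, the quotient of `Δ = (ℤ/pℤ)ˣ` by the subgroup generated
by `j = σ₋₁`. -/
def DeltaPlus (p : ℕ) [Fact p.Prime] : Type :=
  (ZMod p)ˣ ⧸ Subgroup.zpowers (-1 : (ZMod p)ˣ)

instance (p : ℕ) [Fact p.Prime] : CommGroup (DeltaPlus p) :=
  QuotientGroup.Quotient.commGroup (Subgroup.zpowers (-1 : (ZMod p)ˣ))

/-- The norm element `N⁺ = Σ_{τ ∈ Δ⁺} τ ∈ ℤ[Δ⁺]`. -/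
noncomputable def normPlus (p : ℕ) [Fact p.Prime] : MonoidAlgebra ℤ (DeltaPlus p) :=
  ∑ᶠ τ : DeltaPlus p, MonoidAlgebra.single τ (1 : ℤ)

/-!
Since `g · N = N` for every `g ∈ G`, we get `a · N = ε(a) · N` with `ε` the augmentation, so the
ideal of `ℤ[G]` generated by `n · N` is `ℤ · n · N`: the elements whose coefficients are all equal
to one multiple of `n`. Hence `f ↦ ((f(g) - f(1))_{g ≠ 1}, f(1) mod n)` induces
`ℤ[G] / (n · N) ≅ ℤ^{G ∖ 1} × ℤ/n`, and for `G = Δ⁺` we have `|G| - 1 = (p - 3) / 2`.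
-/

namespace MonoidAlgebra

section NormElement

variable (k G : Type*) [Semiring k] [Fintype G]

noncomputable def normElement : MonoidAlgebra k G :=
  ∑ g : G, single g 1

variable {k G}

@[simp]
lemma coeff_normElement (g : G) : (normElement k G).coeff g = 1 := by
  classical
  simp [normElement, coeff_sum, coeff_single, Finsupp.single_apply]

lemma eq_smul_normElement_of_coeff_eq {f : MonoidAlgebra k G} {c : k}
    (hf : ∀ g, f.coeff g = c) : f = c • normElement k G :=
  ext <| Finsupp.ext fun g => by simp [hf]

variable [Group G]

lemma single_mul_normElement (g : G) (c : k) :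
    single g c * normElement k G = c • normElement k G := by
  rw [normElement, Finset.mul_sum, Finset.smul_sum]
  refine Fintype.sum_equiv (Equiv.mulLeft g) _ _ fun τ => ?_
  simp [single_mul_single, smul_single]

lemma mul_normElement (a : MonoidAlgebra k G) :
    a * normElement k G = (∑ g, a.coeff g) • normElement k G := by
  classical
  induction a using induction_linear with
  | zero => simp
  | add a b ha hb =>
    simp only [add_mul, ha, hb, coeff_add, Finsupp.add_apply, Finset.sum_add_distrib, add_smul]
  | single g c => simp [single_mul_normElement, coeff_single, Finsupp.single_apply]

end NormElement

section CoeffDiffMod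

variable {G : Type*} [One G]

variable (G) in
noncomputable def coeffDiffModHom (n : ℕ) :
    MonoidAlgebra ℤ G →+ ({g : G // g ≠ 1} → ℤ) × ZMod n :=
  let coeffHom (g : G) : MonoidAlgebra ℤ G →+ ℤ :=
    (Finsupp.applyAddHom g).comp coeffAddEquiv.toAddMonoidHom
  (AddMonoidHom.pi fun g : {g : G // g ≠ 1} => coeffHom g - coeffHom 1).prod
    ((Int.castAddHom (ZMod n)).comp (coeffHom 1))

lemma coeffDiffModHom_apply (n : ℕ) (f : MonoidAlgebra ℤ G) :
    coeffDiffModHom G n f = (fun g => f.coeff g.1 - f.coeff 1, (f.coeff 1 : ZMod n)) :=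
  rfl

lemma coeffDiffModHom_surjective [Finite G] (n : ℕ) :
    Function.Surjective (coeffDiffModHom G n) := by
  classical
  rintro ⟨v, c⟩
  obtain ⟨c, rfl⟩ := ZMod.intCast_surjective c
  refine ⟨ofCoeff (Finsupp.equivFunOnFinite.symm fun g =>
    if h : g = 1 then c else v ⟨g, h⟩ + c), ?_⟩
  ext g
  · simp [coeffDiffModHom_apply, g.2]
  · simp [coeffDiffModHom_apply]

end CoeffDiffMod

section Quotient

variable {G : Type*} [Group G] [Fintype G]

lemma mem_span_smul_normElement_iff (n : ℤ) (f : MonoidAlgebra ℤ G) :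
    f ∈ Ideal.span {n • normElement ℤ G} ↔ ∃ m : ℤ, ∀ g, f.coeff g = n * m := by
  rw [Ideal.mem_span_singleton']
  constructor
  · rintro ⟨a, rfl⟩
    refine ⟨∑ g, a.coeff g, fun g => ?_⟩
    rw [mul_smul_comm, mul_normElement, smul_smul, coeff_smul_apply, coeff_normElement,
      smul_eq_mul, mul_one]
  · rintro ⟨m, hm⟩
    refine ⟨single 1 m, ?_⟩
    rw [mul_smul_comm, single_mul_normElement, smul_smul, eq_smul_normElement_of_coeff_eq hm,
      mul_comm]

lemma ker_coeffDiffModHom (n : ℕ) :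
    (coeffDiffModHom G n).ker = (Ideal.span {(n : ℤ) • normElement ℤ G}).toAddSubgroup := by
  ext f
  rw [AddMonoidHom.mem_ker, Submodule.mem_toAddSubgroup, mem_span_smul_normElement_iff,
    coeffDiffModHom_apply, Prod.mk_eq_zero, funext_iff, ZMod.intCast_zmod_eq_zero_iff_dvd]
  constructor
  · rintro ⟨hconst, m, hm⟩
    refine ⟨m, fun g => ?_⟩
    by_cases hg : g = 1
    · rw [hg, hm]
    · simpa [← hm, sub_eq_zero] using hconst ⟨g, hg⟩
  · rintro ⟨m, hm⟩
    exact ⟨fun g => by simp [hm], m, hm 1⟩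

variable (G) in
noncomputable def quotientSpanSmulNormElementAddEquiv (n : ℕ) :
    (MonoidAlgebra ℤ G ⧸ Ideal.span {(n : ℤ) • normElement ℤ G}) ≃+
      ({g : G // g ≠ 1} → ℤ) × ZMod n :=
  (QuotientAddGroup.quotientAddEquivOfEq (ker_coeffDiffModHom n).symm).trans
    (QuotientAddGroup.quotientKerEquivOfSurjective _ (coeffDiffModHom_surjective n))

end Quotient

end MonoidAlgebra

instance (p : ℕ) [Fact p.Prime] : Finite (DeltaPlus p) :=
  inferInstanceAs (Finite ((ZMod p)ˣ ⧸ Subgroup.zpowers (-1 : (ZMod p)ˣ)))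

lemma orderOf_neg_one_units_zmod {p : ℕ} [Fact p.Prime] (hp : p ≠ 2) :
    orderOf (-1 : (ZMod p)ˣ) = 2 := by
  rw [← orderOf_units, Units.val_neg, Units.val_one, orderOf_neg_one, ZMod.ringChar_zmod_n,
    if_neg hp]

lemma card_deltaPlus {p : ℕ} [Fact p.Prime] (hp : p ≠ 2) :
    Nat.card (DeltaPlus p) = (p - 1) / 2 := by
  have h := (Subgroup.zpowers (-1 : (ZMod p)ˣ)).index_mul_card
  rw [Nat.card_zpowers, orderOf_neg_one_units_zmod hp, Nat.card_eq_fintype_card,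
    ZMod.card_units] at h
  change Nat.card (DeltaPlus p) * 2 = p - 1 at h
  omega

/-- Paper's Proposition `bf_plus`: for an odd prime `p`, the quotient
`ℤ[Δ⁺]/(p·N⁺·ℤ[Δ⁺])` is isomorphic as an abelian group to `ℤ^{(p−3)/2} ⊕ ℤ/pℤ`. -/
theorem stmt13 (p : ℕ) [Fact p.Prime] (hp : Odd p) :
    Nonempty
      ((MonoidAlgebra ℤ (DeltaPlus p) ⧸ Ideal.span {(p : ℤ) • normPlus p}) ≃+
        ((Fin ((p - 3) / 2) → ℤ) × ZMod p)) := by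
  classical
  let _ : Fintype (DeltaPlus p) := Fintype.ofFinite _
  have hp2 : p ≠ 2 := by rintro rfl; exact absurd hp (by decide)
  have hnorm : normPlus p = MonoidAlgebra.normElement ℤ (DeltaPlus p) :=
    finsum_eq_sum_of_fintype _
  have hcard : Nat.card {g : DeltaPlus p // g ≠ 1} = (p - 3) / 2 := by
    rw [Nat.card_eq_fintype_card, Fintype.card_subtype_compl, Fintype.card_subtype_eq,
      ← Nat.card_eq_fintype_card, card_deltaPlus hp2]
    omega
  rw [hnorm]
  exact ⟨(MonoidAlgebra.quotientSpanSmulNormElementAddEquiv _ p).trans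
    ((AddEquiv.arrowCongr (Finite.equivFinOfCardEq hcard) (.refl ℤ)).prodCongr (.refl _))⟩
end

section
/- Let p be an odd prime, Δ = (ℤ/pℤ)ˣ, and pθ = −Σ_{i=1}^{p−1} i·σ_i^{−1}. Let 𝒪 be an integral domain in which p − 1 is invertible (in the paper, 𝒪 is the valuation ring of ℚ_ℓ(μ_{p−1}) for a prime ℓ ∤ p − 1), and let ψ : Δ → 𝒪ˣ be a group homomorphism. Let e_ψ = (p−1)^{−1}·Σ_{σ∈Δ} ψ(σ)·σ^{−1} ∈ 𝒪[Δ] (an idempotent), and let ψ also denote the 𝒪-algebra homomorphism 𝒪[Δ] → 𝒪 sending Σ a_σ·σ to Σ a_σ·ψ(σ), so that ψ(pθ) = −Σ_{i=1}^{p−1} i·ψ(σ_i)^{−1}. Then the 𝒪-module e_ψ·(𝒪[Δ]/(pθ·𝒪[Δ])) is isomorphic to 𝒪/(ψ(pθ)·𝒪). In particular, if ψ is nontrivial and even (ψ(σ_{−1}) = 1), then e_ψ·(𝒪[Δ]/(pθ·𝒪[Δ])) ≅ 𝒪. (Paper's Theorem 'key_iso1'.) -/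
/-!
The character `ψ` extends to an algebra map `ψ̂ : 𝒪[Δ] → 𝒪`, and `x · e_ψ = ψ̂(x) · e_ψ` for
every `x`. Hence multiplication by the class of `e_ψ` on `𝒪[Δ]/(pθ)` has image `𝒪 · ē_ψ`, and
`c · e_ψ ∈ (pθ)` iff `ψ(pθ) ∣ c`: apply `ψ̂`, which sends `e_ψ` to `1`, for one direction, and
write `ψ(pθ) · e_ψ = pθ · e_ψ` for the other. For even `ψ`, pairing `u` with `-u` gives
`2 ψ(pθ) = -p Σ_u ψ(u)⁻¹`, which vanishes when `ψ` is nontrivial.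
-/

/-- The integralized Stickelberger element `pθ = −Σ_{i=1}^{p−1} i·σ_i^{−1}` in the group
ring `𝒪[Δ]` over a commutative ring `𝒪`, where `Δ = (ℤ/pℤ)ˣ`. -/
noncomputable def pThetaR (p : ℕ) [Fact p.Prime] (O : Type*) [CommRing O] :
    MonoidAlgebra O (ZMod p)ˣ :=
  -∑ u : (ZMod p)ˣ, MonoidAlgebra.single u⁻¹ (((u : ZMod p).val : O))

/-- The idempotent `e_ψ = (p−1)⁻¹·Σ_{σ∈Δ} ψ(σ)·σ⁻¹ ∈ 𝒪[Δ]` attached to a character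
`ψ : Δ → 𝒪ˣ` (using `Ring.inverse` for the inverse of `p − 1`). -/
noncomputable def idem (p : ℕ) [Fact p.Prime] (O : Type*) [CommRing O]
    (ψ : (ZMod p)ˣ →* Oˣ) : MonoidAlgebra O (ZMod p)ˣ :=
  Ring.inverse ((p - 1 : ℕ) : O) •
    ∑ σ : (ZMod p)ˣ, MonoidAlgebra.single σ⁻¹ ((ψ σ : Oˣ) : O)

/-- The image `ψ(pθ) = −Σ_{i=1}^{p−1} i·ψ(σ_i)⁻¹ ∈ 𝒪` of `pθ` under the algebra
homomorphism induced by `ψ`. -/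
noncomputable def psiPTheta (p : ℕ) [Fact p.Prime] (O : Type*) [CommRing O]
    (ψ : (ZMod p)ˣ →* Oˣ) : O :=
  -∑ u : (ZMod p)ˣ, ((u : ZMod p).val : O) * (((ψ u)⁻¹ : Oˣ) : O)

namespace MonoidAlgebra

variable {R G : Type*} [CommSemiring R] [Group G] (χ : G →* Rˣ)

noncomputable def charEval : MonoidAlgebra R G →ₐ[R] R :=
  lift R R G ((Units.coeHom R).comp χ)

@[simp]
lemma charEval_single (g : G) (r : R) : charEval χ (single g r) = r * χ g := by
  simp [charEval, lift_single, smul_eq_mul]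

variable [Fintype G]

noncomputable def charSum : MonoidAlgebra R G :=
  ∑ σ : G, single σ⁻¹ (χ σ : R)

lemma single_mul_charSum (g : G) (r : R) :
    single g r * charSum χ = charEval χ (single g r) • charSum χ := by
  rw [charSum, Finset.mul_sum, Finset.smul_sum, charEval_single]
  -- `τ ↦ τ * g⁻¹` turns `g * τ⁻¹` into `(τ * g⁻¹)⁻¹`
  refine Fintype.sum_equiv (Equiv.mulRight g⁻¹) _ _ fun τ => ?_
  simp only [Equiv.coe_mulRight, single_mul_single, smul_single, smul_eq_mul, mul_inv_rev,
    inv_inv, map_mul, map_inv, Units.val_mul]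
  rw [mul_comm (χ τ : R), ← mul_assoc, Units.mul_inv_cancel_right]

lemma mul_charSum (x : MonoidAlgebra R G) : x * charSum χ = charEval χ x • charSum χ := by
  induction x using induction_linear with
  | zero => rw [zero_mul, map_zero, zero_smul]
  | add x y hx hy => rw [add_mul, hx, hy, map_add, add_smul]
  | single g r => exact single_mul_charSum χ g r

lemma charEval_charSum : charEval χ (charSum χ) = Fintype.card G := by
  simp [charSum]

end MonoidAlgebra

section EigenQuotient

variable {R A : Type*} [CommRing R] [CommRing A] [Algebra R A] (f : A →ₐ[R] R) {e : A} (θ : A)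

lemma range_mulLeft_mk_eq_range_toSpanSingleton (he : ∀ x, x * e = f x • e) :
    LinearMap.range (LinearMap.mulLeft R (Ideal.Quotient.mk (Ideal.span {θ}) e)) =
      LinearMap.range (LinearMap.toSpanSingleton R _ (Ideal.Quotient.mk (Ideal.span {θ}) e)) := by
  apply le_antisymm
  · rintro _ ⟨y, rfl⟩
    obtain ⟨x, rfl⟩ := Ideal.Quotient.mk_surjective y
    refine ⟨f x, ?_⟩
    rw [LinearMap.toSpanSingleton_apply, LinearMap.mulLeft_apply, ← map_mul, mul_comm, he,
      ← Ideal.Quotient.mkₐ_eq_mk R, map_smul]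
  · rintro _ ⟨c, rfl⟩
    exact ⟨c • 1, by simp⟩

lemma ker_toSpanSingleton_mk (he : ∀ x, x * e = f x • e) (hfe : f e = 1) :
    LinearMap.ker (LinearMap.toSpanSingleton R _ (Ideal.Quotient.mk (Ideal.span {θ}) e)) =
      Ideal.span {f θ} := by
  ext c
  rw [LinearMap.mem_ker, LinearMap.toSpanSingleton_apply, ← Ideal.Quotient.mkₐ_eq_mk R,
    ← map_smul, Ideal.Quotient.mkₐ_eq_mk, Ideal.Quotient.eq_zero_iff_mem,
    Ideal.mem_span_singleton', Ideal.mem_span_singleton']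
  constructor
  · rintro ⟨a, ha⟩
    refine ⟨f a, ?_⟩
    simpa [hfe] using congrArg f ha
  · rintro ⟨d, rfl⟩
    exact ⟨d • e, by rw [smul_mul_assoc, mul_comm, he, smul_smul]⟩

noncomputable def rangeMulLeftMkEquiv (he : ∀ x, x * e = f x • e) (hfe : f e = 1) :
    LinearMap.range (LinearMap.mulLeft R (Ideal.Quotient.mk (Ideal.span {θ}) e)) ≃ₗ[R]
      R ⧸ Ideal.span {f θ} :=
  (LinearEquiv.ofEq _ _ (range_mulLeft_mk_eq_range_toSpanSingleton f θ he)).trans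
    ((LinearMap.quotKerEquivRange _).symm.trans
      (Submodule.quotEquivOfEq _ _ (ker_toSpanSingleton_mk f θ he hfe)))

end EigenQuotient

lemma Units.sum_coe_inv_eq_zero {G R : Type*} [Group G] [Fintype G] [CommRing R] [IsDomain R]
    (χ : G →* Rˣ) (hχ : χ ≠ 1) : ∑ g, (((χ g)⁻¹ : Rˣ) : R) = 0 :=
  sum_hom_units_eq_zero ((Units.coeHom R).comp χ⁻¹) fun h =>
    hχ (inv_eq_one.mp (MonoidHom.ext fun g => Units.ext (DFunLike.congr_fun h g)))

lemma ZMod.two_mul_sum_val_mul_of_even {p : ℕ} [Fact p.Prime] {R : Type*} [CommRing R]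
    (g : (ZMod p)ˣ → R) (hg : ∀ u, g (-u) = g u) :
    2 * ∑ u : (ZMod p)ˣ, ((u : ZMod p).val : R) * g u = p * ∑ u, g u := by
  have hval (u : (ZMod p)ˣ) :
      (((-u : (ZMod p)ˣ) : ZMod p).val : R) + ((u : ZMod p).val : R) = p := by
    rw [Units.val_neg, ZMod.neg_val, if_neg u.ne_zero, ← Nat.cast_add,
      Nat.sub_add_cancel (ZMod.val_lt _).le]
  calc 2 * ∑ u : (ZMod p)ˣ, ((u : ZMod p).val : R) * g u
      = ∑ u : (ZMod p)ˣ, (((-u : (ZMod p)ˣ) : ZMod p).val : R) * g (-u) +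
          ∑ u : (ZMod p)ˣ, ((u : ZMod p).val : R) * g u := by
        rw [two_mul]
        congr 1
        exact (Fintype.sum_equiv (Equiv.neg _) _ _ fun _ => rfl).symm
    _ = p * ∑ u, g u := by
        simp only [hg, ← Finset.sum_add_distrib, ← add_mul, hval, Finset.mul_sum]

lemma isUnit_two_of_odd {R : Type*} [CommRing R] {n : ℕ} (hn : Odd n)
    (hu : IsUnit ((n - 1 : ℕ) : R)) : IsUnit (2 : R) := by
  obtain ⟨k, rfl⟩ := hn
  rw [Nat.add_sub_cancel, Nat.cast_mul, Nat.cast_ofNat] at hu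
  exact isUnit_of_mul_isUnit_left hu

section Stickelberger

variable {p : ℕ} [Fact p.Prime] {O : Type*} [CommRing O] (ψ : (ZMod p)ˣ →* Oˣ)

open MonoidAlgebra

lemma idem_eq_smul_charSum : idem p O ψ = Ring.inverse ((p - 1 : ℕ) : O) • charSum ψ :=
  rfl

lemma mul_idem (x : MonoidAlgebra O (ZMod p)ˣ) :
    x * idem p O ψ = charEval ψ x • idem p O ψ := by
  rw [idem_eq_smul_charSum, mul_smul_comm, mul_charSum, smul_comm]

lemma charEval_idem (hu : IsUnit ((p - 1 : ℕ) : O)) : charEval ψ (idem p O ψ) = 1 := by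
  rw [idem_eq_smul_charSum, map_smul, charEval_charSum, ZMod.card_units_eq_totient,
    Nat.totient_prime Fact.out, smul_eq_mul, Ring.inverse_mul_cancel _ hu]

lemma charEval_pThetaR : charEval ψ (pThetaR p O) = psiPTheta p O ψ := by
  simp [pThetaR, psiPTheta]

lemma psiPTheta_eq_zero_of_even [IsDomain O] (hp : Odd p) (hu : IsUnit ((p - 1 : ℕ) : O))
    (hψ : ψ ≠ 1) (heven : ψ (-1) = 1) : psiPTheta p O ψ = 0 := by
  have h := ZMod.two_mul_sum_val_mul_of_even (fun u => (((ψ u)⁻¹ : Oˣ) : O)) fun u => by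
    rw [← neg_one_mul, map_mul, heven, one_mul]
  rw [Units.sum_coe_inv_eq_zero ψ hψ, mul_zero] at h
  rw [psiPTheta, (mul_eq_zero.mp h).resolve_left (isUnit_two_of_odd hp hu).ne_zero, neg_zero]

end Stickelberger

/-- Paper's Theorem `key_iso1`: let `p` be an odd prime, `𝒪` an integral domain in which
`p − 1` is invertible, and `ψ : Δ → 𝒪ˣ` a character. Then the `𝒪`-module
`e_ψ·(𝒪[Δ]/(pθ·𝒪[Δ]))` is isomorphic to `𝒪/(ψ(pθ)·𝒪)`; in particular, for `ψ` nontrivial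
and even it is isomorphic to `𝒪`. -/
theorem stmt17 (p : ℕ) [Fact p.Prime] (hp : Odd p)
    (O : Type*) [CommRing O] [IsDomain O]
    (hu : IsUnit ((p - 1 : ℕ) : O))
    (ψ : (ZMod p)ˣ →* Oˣ) :
    Nonempty
      ((LinearMap.range (LinearMap.mulLeft O
          (Ideal.Quotient.mk (Ideal.span {pThetaR p O}) (idem p O ψ)))) ≃ₗ[O]
        (O ⧸ Ideal.span {psiPTheta p O ψ})) ∧
    (ψ ≠ 1 → ((ψ (-1) : Oˣ) : O) = 1 →
      Nonempty
        ((LinearMap.range (LinearMap.mulLeft O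
            (Ideal.Quotient.mk (Ideal.span {pThetaR p O}) (idem p O ψ)))) ≃ₗ[O] O)) := by
  have iso := rangeMulLeftMkEquiv (MonoidAlgebra.charEval ψ) (pThetaR p O) (mul_idem ψ)
    (charEval_idem ψ hu)
  rw [charEval_pThetaR] at iso
  refine ⟨⟨iso⟩, fun hψ heven => ⟨iso.trans (Submodule.quotEquivOfEqBot _ ?_)⟩⟩
  rw [psiPTheta_eq_zero_of_even ψ hp hu hψ (Units.val_eq_one.mp heven),
    Ideal.span_singleton_eq_bot]
end

section
/- Let p be an odd prime and consider the polynomials g(x) = 1 + x + x² + ⋯ + x^{(p−3)/2} and k(x) = (x − 1)·(x^{(p−1)/2} + 1) in ℤ[x]. Then the quotient ring ℤ[x]/(g(x), k(x)) (the quotient by the ideal generated by g and k) is finite, of cardinality 2^{(p−3)/2}·(p−1)/2. (This is the computation in Appendix B, Step 4, giving |m(Y)| as the absolute value of the resultant of g and k.) -/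
open Polynomial

/-- The polynomial `g(x) = 1 + x + ⋯ + x^{(p−3)/2} = Σ_{i < (p−1)/2} xⁱ ∈ ℤ[x]`. -/
noncomputable def gPoly (p : ℕ) : Polynomial ℤ :=
  ∑ i ∈ Finset.range ((p - 1) / 2), X ^ i

/-- The polynomial `k(x) = (x − 1)·(x^{(p−1)/2} + 1) ∈ ℤ[x]`. -/
noncomputable def kPoly (p : ℕ) : Polynomial ℤ :=
  (X - 1) * (X ^ ((p - 1) / 2) + 1)

/-!
Write `n = (p − 1)/2`, so `g = 1 + x + ⋯ + x^{n−1}` is monic with `g·(x − 1) = xⁿ − 1`. Then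
`k = 2(x − 1) + (x − 1)²·g`, so `(g, k) = (g, 2(x − 1))` and `ℤ[x]/(g, k) ≅ A/(2(θ − 1))` where
`A = ℤ[x]/(g)` is free of rank `n − 1` over `ℤ` with `θ` the class of `x`. For a free `ℤ`-algebra
of finite rank, `A/(r)` has `|N(r)|` elements as soon as `N(r) ≠ 0` (multiplication by `r` is then
injective and the index of its image is `|det|`). Finally
`N(2(θ − 1)) = (−2)^{n−1}·N(1 − θ) = (−2)^{n−1}·g(1) = (−2)^{n−1}·n`, because the characteristic
polynomial of multiplication by `θ` is `g`.
-/

theorem natCard_quotient_span_singleton_eq_natAbs_norm {S : Type*} [CommRing S]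
    [Module.Free ℤ S] [Module.Finite ℤ S] {r : S} (hr : Algebra.norm ℤ r ≠ 0) :
    Nat.card (S ⧸ Ideal.span {r}) = (Algebra.norm ℤ r).natAbs := by
  let N := (Ideal.span {r}).restrictScalars ℤ
  have hinj : Function.Injective (Algebra.lmul ℤ S r) :=
    LinearMap.ker_eq_bot.mp (not_not.mp fun h => hr (LinearMap.det_eq_zero_iff_ker_ne_bot.mpr h))
  have hrange : LinearMap.range (Algebra.lmul ℤ S r) = N := by
    ext x
    simp [N, Ideal.mem_span_singleton', mul_comm, eq_comm]
  let e : S ≃ₗ[ℤ] N := (LinearEquiv.ofInjective _ hinj).trans (LinearEquiv.ofEq _ _ hrange)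
  rw [← Nat.card_congr (Submodule.Quotient.restrictScalarsEquiv ℤ (Ideal.span {r})).toEquiv,
    ← Submodule.natAbs_det_equiv N e, Algebra.norm_apply]
  rfl

namespace AdjoinRoot

variable {R : Type*} [CommRing R]

theorem minpoly_root_of_monic [Nontrivial R] {g : R[X]} (hg : g.Monic) :
    minpoly R (root g) = g := by
  have hdvd : g ∣ minpoly R (root g) := by
    rw [← mk_eq_zero, ← aeval_eq]
    exact minpoly.aeval R _
  refine eq_of_monic_of_dvd_of_natDegree_le hg
    (minpoly.monic (powerBasis' hg).isIntegral_gen) hdvd ?_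
  rw [← powerBasis'_gen hg, (powerBasis' hg).natDegree_minpoly, powerBasis'_dim]

theorem norm_algebraMap_sub_root [Nontrivial R] {g : R[X]} (hg : g.Monic) (r : R) :
    Algebra.norm R (algebraMap R (AdjoinRoot g) r - root g) = g.eval r := by
  have := hg.free_adjoinRoot
  have := hg.finite_adjoinRoot
  rw [Algebra.norm_apply, map_sub, AlgHom.commutes, ← LinearMap.eval_charpoly,
    ← LinearMap.charpoly_toMatrix _ (powerBasis' hg).basis, ← Algebra.leftMulMatrix_apply,
    ← powerBasis'_gen hg, charpoly_leftMulMatrix, powerBasis'_gen, minpoly_root_of_monic hg]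

noncomputable def quotSpanPairEquiv (f h : R[X]) :
    R[X] ⧸ Ideal.span {f, h} ≃+* AdjoinRoot f ⧸ Ideal.span {mk f h} :=
  ((Ideal.quotEquivOfEq (Ideal.span_insert f {h})).trans
    (DoubleQuot.quotQuotEquivQuotSup (Ideal.span {f}) (Ideal.span {h})).symm).trans
    (Ideal.quotientEquiv _ _ (RingEquiv.refl (AdjoinRoot f))
      (by rw [Ideal.map_span, Ideal.map_span, Set.image_singleton, Set.image_singleton]; rfl))

end AdjoinRoot

namespace Polynomial

variable {R : Type*} [CommRing R]

theorem natDegree_geom_sum_X [Nontrivial R] {n : ℕ} (hn : n ≠ 0) :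
    (∑ i ∈ Finset.range n, (X : R[X]) ^ i).natDegree = n - 1 := by
  have h := congrArg natDegree (geom_sum_mul (X : R[X]) n)
  rw [← C_1, (monic_geom_sum_X hn).natDegree_mul (monic_X_sub_C 1), natDegree_X_sub_C,
    natDegree_X_pow_sub_C] at h
  omega

theorem span_geom_sum_X_X_sub_one_mul (n : ℕ) :
    Ideal.span {∑ i ∈ Finset.range n, (X : R[X]) ^ i, (X - 1) * (X ^ n + 1)} =
      Ideal.span {∑ i ∈ Finset.range n, (X : R[X]) ^ i, 2 * (X - 1)} := by
  have hk : (X - 1) * (X ^ n + 1) =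
      2 * (X - 1) + (X - 1) ^ 2 * ∑ i ∈ Finset.range n, (X : R[X]) ^ i := by
    linear_combination -(X - 1 : R[X]) * geom_sum_mul (X : R[X]) n
  rw [hk, Ideal.span_pair_add_mul_left]

theorem natCard_quotient_span_geom_sum_X_two_mul_X_sub_one {n : ℕ} (hn : n ≠ 0) :
    Nat.card (ℤ[X] ⧸ Ideal.span {∑ i ∈ Finset.range n, (X : ℤ[X]) ^ i, 2 * (X - 1)}) =
      2 ^ (n - 1) * n := by
  set G := ∑ i ∈ Finset.range n, (X : ℤ[X]) ^ i
  have hG : G.Monic := monic_geom_sum_X hn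
  have := hG.free_adjoinRoot
  have := hG.finite_adjoinRoot
  have hnorm : Algebra.norm ℤ (AdjoinRoot.mk G (2 * (X - 1))) = (-2) ^ (n - 1) * n := by
    have hmk : AdjoinRoot.mk G (2 * (X - 1)) =
        algebraMap ℤ _ (-2) * (algebraMap ℤ _ 1 - AdjoinRoot.root G) := by
      simp only [map_mul, map_sub, map_ofNat, map_one, AdjoinRoot.mk_X, map_neg]
      ring
    rw [hmk, map_mul, Algebra.norm_algebraMap, (AdjoinRoot.powerBasis' hG).finrank,
      AdjoinRoot.powerBasis'_dim, natDegree_geom_sum_X hn, AdjoinRoot.norm_algebraMap_sub_root hG]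
    simp [G, eval_finsetSum]
  have hnorm_ne : Algebra.norm ℤ (AdjoinRoot.mk G (2 * (X - 1))) ≠ 0 := by
    rw [hnorm]
    exact mul_ne_zero (pow_ne_zero _ (by norm_num)) (by exact_mod_cast hn)
  rw [Nat.card_congr (AdjoinRoot.quotSpanPairEquiv _ _).toEquiv,
    natCard_quotient_span_singleton_eq_natAbs_norm hnorm_ne]
  -- Not `rw [hnorm]`: the goal's norm uses the generic `Algebra ℤ` instance, `hnorm` uses
  -- `AdjoinRoot.instAlgebra`, and the two agree only up to unfolding.
  exact (congrArg Int.natAbs hnorm).trans (by simp [Int.natAbs_mul, Int.natAbs_pow])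

end Polynomial

/-- Appendix B, Step 4: for an odd prime `p`, the quotient ring `ℤ[x]/(g(x), k(x))` is
finite of cardinality `2^{(p−3)/2}·(p−1)/2` (the absolute value of the resultant of `g`
and `k`). -/
theorem stmt19 (p : ℕ) (hp : p.Prime) (hodd : Odd p) :
    Finite (Polynomial ℤ ⧸ Ideal.span {gPoly p, kPoly p}) ∧
    Nat.card (Polynomial ℤ ⧸ Ideal.span {gPoly p, kPoly p}) =
      2 ^ ((p - 3) / 2) * ((p - 1) / 2) := by
  have hn : (p - 1) / 2 ≠ 0 := by
    have := hp.two_le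
    obtain ⟨k, rfl⟩ := hodd
    omega
  have hcard := natCard_quotient_span_geom_sum_X_two_mul_X_sub_one hn
  rw [← span_geom_sum_X_X_sub_one_mul] at hcard
  rw [gPoly, kPoly, hcard]
  exact ⟨Nat.finite_of_card_ne_zero (by rw [hcard]; positivity), by congr 2; omega⟩
end
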